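/- Let d ≥ 1 and for i = 1,…,d let φ_i : ℝ → ℝ be a Borel measurable function satisfying the (non-incremental) sector bound μ_i·x² ≤ x·φ_i(x) ≤ λ_i·x² for all x ∈ ℝ, where μ_i ≤ λ_i are real constants (in particular φ_i(0) = 0 and |φ_i(x)| ≤ max(|μ_i|,|λ_i|)·|x|, so the diagonal static operator Φ : L₂^d → L₂^d, (Φu)(t) := (φ₁(u₁(t)),…,φ_d(u_d(t))), is well defined). Set μ := min_i μ_i and λ := max_i λ_i. Then SG₀(Φ) ⊆ { z ∈ ℂ : |z − (λ+μ)/2| ≤ (λ−μ)/2 }. -/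

import Mathlib

open ComplexConjugate
open scoped RealInnerProductSpace Pointwise

/-- The point `(‖Δy‖/‖Δu‖)·e^{iθ}` with `θ = arccos(⟨Δu,Δy⟩/(‖Δu‖‖Δy‖)) ∈ [0,π]`
contributed to the SRG by a pair of increments `Δu`, `Δy` (equal to `0` when `Δy = 0`). -/
noncomputable def srgPoint {H : Type*} [NormedAddCommGroup H] [InnerProductSpace ℝ H]
    (du dy : H) : ℂ :=
  ((‖dy‖ / ‖du‖ : ℝ) : ℂ) *
    Complex.exp (Complex.I * ((Real.arccos (⟪du, dy⟫ / (‖du‖ * ‖dy‖)) : ℝ) : ℂ))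

/-- The Scaled Relative Graph of an operator `R` on a real Hilbert space over a set `U` of
inputs; both signs of the angle are included (via complex conjugation). -/
noncomputable def SRG {H : Type*} [NormedAddCommGroup H] [InnerProductSpace ℝ H]
    (R : H → H) (U : Set H) : Set ℂ :=
  { z | ∃ u₁ ∈ U, ∃ u₂ ∈ U, u₁ ≠ u₂ ∧
      (z = srgPoint (u₁ - u₂) (R u₁ - R u₂) ∨
        z = conj (srgPoint (u₁ - u₂) (R u₁ - R u₂))) }

/-- The Scaled Graph of an operator `R` at the particular input `us`, over a set `U` of inputs. -/
noncomputable def SG {H : Type*} [NormedAddCommGroup H] [InnerProductSpace ℝ H]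
    (R : H → H) (U : Set H) (us : H) : Set ℂ :=
  { z | ∃ u ∈ U, u ≠ us ∧
      (z = srgPoint (u - us) (R u - R us) ∨
        z = conj (srgPoint (u - us) (R u - R us))) }


open MeasureTheory

/-- `L₂^d = L²([0,∞), ℝ^d)`. -/
noncomputable abbrev L2S (d : ℕ) :=
  MeasureTheory.Lp (EuclideanSpace ℝ (Fin d)) 2 (MeasureTheory.volume.restrict (Set.Ici (0 : ℝ)))

/-!
For `u ≠ 0` the point `z = srgPoint u y` has modulus `‖y‖/‖u‖` and real part `⟪u, y⟫/‖u‖²`, so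
`|z - c| = ‖y - c u‖/‖u‖` for every real `c`; conjugation does not change this. Completing the
square, `‖y - c u‖² = r² ‖u‖² + ⟪y - λu, y - μu⟫` with `c = (λ+μ)/2`, `r = (λ-μ)/2`, so the disk
bound reduces to `⟪Φu - λu, Φu - μu⟫ ≤ 0`. This holds pointwise in `t` and in each coordinate,
since the sector bound says that `φᵢ(x)` lies between `μx` and `λx`.
-/

section ScaledGraph

variable {H : Type*} [NormedAddCommGroup H] [InnerProductSpace ℝ H]

theorem norm_srgPoint (u y : H) : ‖srgPoint u y‖ = ‖y‖ / ‖u‖ := by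
  rw [srgPoint, norm_mul, Complex.norm_exp_I_mul_ofReal, mul_one, Complex.norm_real,
    Real.norm_of_nonneg (by positivity)]

theorem re_srgPoint (u y : H) : (srgPoint u y).re = ⟪u, y⟫ / ‖u‖ ^ 2 := by
  rw [srgPoint, Complex.re_ofReal_mul, mul_comm Complex.I, Complex.exp_ofReal_mul_I_re]
  rcases eq_or_ne (‖u‖ * ‖y‖) 0 with h | h
  · have hp : ⟪u, y⟫ = 0 := by
      rcases mul_eq_zero.1 h with h | h <;> simp [norm_eq_zero.1 h]
    rcases mul_eq_zero.1 h with h | h <;> simp [h, hp]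
  · have hpos : 0 < ‖u‖ * ‖y‖ := lt_of_le_of_ne (by positivity) (Ne.symm h)
    have hcs : |⟪u, y⟫ / (‖u‖ * ‖y‖)| ≤ 1 := by
      rw [abs_div, abs_of_pos hpos, div_le_one hpos]
      exact abs_real_inner_le_norm u y
    rw [Real.cos_arccos (abs_le.1 hcs).1 (abs_le.1 hcs).2]
    have hu : ‖u‖ ≠ 0 := left_ne_zero_of_mul h
    have hy : ‖y‖ ≠ 0 := right_ne_zero_of_mul h
    field_simp

theorem norm_srgPoint_sub_ofReal {u : H} (hu : u ≠ 0) (y : H) (c : ℝ) :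
    ‖srgPoint u y - c‖ = ‖y - c • u‖ / ‖u‖ := by
  have hu' : ‖u‖ ≠ 0 := norm_ne_zero_iff.2 hu
  rw [← sq_eq_sq₀ (norm_nonneg _) (by positivity), Complex.sq_norm, Complex.normSq_sub,
    Complex.normSq_eq_norm_sq, norm_srgPoint, Complex.normSq_ofReal, Complex.conj_ofReal,
    Complex.re_mul_ofReal, re_srgPoint, div_pow, div_pow, norm_sub_sq_real, real_inner_smul_right,
    norm_smul, Real.norm_eq_abs, mul_pow, sq_abs, real_inner_comm]
  field_simp
  ring

theorem norm_conj_sub_ofReal (z : ℂ) (c : ℝ) : ‖conj z - c‖ = ‖z - c‖ := by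
  rw [← Complex.norm_conj, map_sub, Complex.conj_conj, Complex.conj_ofReal]

theorem norm_sub_midpoint_smul_le {a b : ℝ} (hab : a ≤ b) {u y : H}
    (h : ⟪y - b • u, y - a • u⟫ ≤ 0) : ‖y - ((b + a) / 2) • u‖ ≤ (b - a) / 2 * ‖u‖ := by
  have hsq : ‖y - ((b + a) / 2) • u‖ ^ 2 = ((b - a) / 2 * ‖u‖) ^ 2 + ⟪y - b • u, y - a • u⟫ := by
    simp only [norm_sub_sq_real, inner_sub_left, inner_sub_right, real_inner_smul_left,
      real_inner_smul_right, norm_smul, Real.norm_eq_abs, mul_pow, sq_abs,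
      real_inner_self_eq_norm_sq, real_inner_comm y u]
    ring
  have hr : 0 ≤ (b - a) / 2 * ‖u‖ := mul_nonneg (by linarith) (norm_nonneg u)
  exact (pow_le_pow_iff_left₀ (norm_nonneg _) hr two_ne_zero).1 (by linarith)

theorem SG_subset_of_inner_nonpos {R : H → H} {U : Set H} {us : H} {a b : ℝ} (hab : a ≤ b)
    (h : ∀ u ∈ U, ⟪R u - R us - b • (u - us), R u - R us - a • (u - us)⟫ ≤ 0) :
    SG R U us ⊆ {z : ℂ | ‖z - (((b + a) / 2 : ℝ) : ℂ)‖ ≤ (b - a) / 2} := by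
  rintro z ⟨u, hu, hne, rfl | rfl⟩
  all_goals
    have hne' : u - us ≠ 0 := sub_ne_zero.2 hne
    simp only [Set.mem_ofPred_eq, norm_conj_sub_ofReal]
    rw [norm_srgPoint_sub_ofReal hne', div_le_iff₀ (norm_pos_iff.2 hne')]
    exact norm_sub_midpoint_smul_le hab (h u hu)

end ScaledGraph

/-- The non-incremental sector condition `f ∈ [a, b]`. -/
def SectorBounded (a b : ℝ) (f : ℝ → ℝ) : Prop :=
  ∀ x, a * x ^ 2 ≤ x * f x ∧ x * f x ≤ b * x ^ 2

namespace SectorBounded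

variable {a b : ℝ} {f : ℝ → ℝ}

theorem mono {a' b' : ℝ} (h : SectorBounded a b f) (ha : a' ≤ a) (hb : b ≤ b') :
    SectorBounded a' b' f := fun x =>
  ⟨(mul_le_mul_of_nonneg_right ha (sq_nonneg x)).trans (h x).1,
    (h x).2.trans (mul_le_mul_of_nonneg_right hb (sq_nonneg x))⟩

theorem le (h : SectorBounded a b f) : a ≤ b := by
  simpa using (h 1).1.trans (h 1).2

theorem mul_nonpos (h : SectorBounded a b f) (h0 : f 0 = 0) (x : ℝ) :
    (f x - b * x) * (f x - a * x) ≤ 0 := by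
  rcases eq_or_ne x 0 with rfl | hx
  · simp [h0]
  have hprod : x ^ 2 * ((f x - b * x) * (f x - a * x)) ≤ 0 := by
    have : x ^ 2 * ((f x - b * x) * (f x - a * x)) =
        (x * f x - b * x ^ 2) * (x * f x - a * x ^ 2) := by ring
    rw [this]
    exact mul_nonpos_of_nonpos_of_nonneg (by linarith [(h x).2]) (by linarith [(h x).1])
  exact nonpos_of_mul_nonpos_right hprod (by positivity)

end SectorBounded

theorem EuclideanSpace.inner_sub_smul_nonpos_of_sectorBounded {ι : Type*} [Fintype ι]
    {φ : ι → ℝ → ℝ} {a b : ℝ} (hsec : ∀ i, SectorBounded a b (φ i)) (hφ0 : ∀ i, φ i 0 = 0)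
    {v w : EuclideanSpace ℝ ι} (hw : ∀ i, w i = φ i (v i)) :
    ⟪w - b • v, w - a • v⟫ ≤ 0 := by
  rw [PiLp.inner_apply]
  refine Finset.sum_nonpos fun i _ => ?_
  simp only [PiLp.sub_apply, PiLp.smul_apply, smul_eq_mul, hw, RCLike.inner_apply, conj_trivial]
  rw [mul_comm]
  exact (hsec i).mul_nonpos (hφ0 i) (v i)

theorem MeasureTheory.L2.inner_sub_smul_nonpos_of_sectorBounded {ι α : Type*} [Fintype ι]
    [MeasurableSpace α] {ν : Measure α} {φ : ι → ℝ → ℝ} {a b : ℝ}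
    (hsec : ∀ i, SectorBounded a b (φ i)) (hφ0 : ∀ i, φ i 0 = 0)
    {u y : α →₂[ν] EuclideanSpace ℝ ι} (hy : ∀ᵐ t ∂ν, ∀ i, y t i = φ i (u t i)) :
    ⟪y - b • u, y - a • u⟫ ≤ 0 := by
  rw [L2.inner_def]
  refine integral_nonpos_of_ae ?_
  filter_upwards [Lp.coeFn_sub y (b • u), Lp.coeFn_sub y (a • u), Lp.coeFn_smul b u,
    Lp.coeFn_smul a u, hy] with t hb ha hbu hau hyt
  rw [hb, ha, Pi.sub_apply, Pi.sub_apply, hbu, hau]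
  exact EuclideanSpace.inner_sub_smul_nonpos_of_sectorBounded hsec hφ0 hyt

theorem MeasureTheory.Lp.const_eq_zero_of_ae_eq {α E : Type*} [MeasurableSpace α]
    {ν : Measure α} [NormedAddCommGroup E] {p : ENNReal} (hp0 : p ≠ 0) (hp : p ≠ ⊤)
    (hν : ν Set.univ = ⊤) (f : Lp E p ν) {c : E} (hf : f =ᵐ[ν] fun _ => c) : c = 0 := by
  have := (Lp.memLp f).ae_eq hf
  rw [memLp_const_iff hp0 hp] at this
  simpa [hν] using this

theorem stmt19_general (d : ℕ) (hd : 1 ≤ d) (φ : Fin d → ℝ → ℝ) (m l : Fin d → ℝ)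
    (hsec : ∀ i, ∀ x : ℝ,
      m i * x ^ 2 ≤ x * φ i x ∧ x * φ i x ≤ l i * x ^ 2)
    (Φ : L2S d → L2S d)
    (hΦ : ∀ u : L2S d, ∀ᵐ t ∂(MeasureTheory.volume.restrict (Set.Ici (0 : ℝ))),
      (Φ u : ℝ → EuclideanSpace ℝ (Fin d)) t =
        fun i => φ i ((u : ℝ → EuclideanSpace ℝ (Fin d)) t i)) :
    SG Φ (Set.univ : Set (L2S d)) 0 ⊆
      { z : ℂ | ‖z - (((sSup (Set.range l) + sInf (Set.range m)) / 2 : ℝ) : ℂ)‖ ≤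
          (sSup (Set.range l) - sInf (Set.range m)) / 2 } := by
  have hsec' : ∀ i, SectorBounded (sInf (Set.range m)) (sSup (Set.range l)) (φ i) := fun i =>
    SectorBounded.mono (hsec i) (csInf_le (Set.finite_range m).bddBelow ⟨i, rfl⟩)
      (le_csSup (Set.finite_range l).bddAbove ⟨i, rfl⟩)
  have hΦ0 : (Φ 0 : ℝ → EuclideanSpace ℝ (Fin d)) =ᵐ[volume.restrict (Set.Ici 0)]
      fun _ => WithLp.toLp 2 fun i => φ i 0 := by
    filter_upwards [hΦ 0, Lp.coeFn_zero (EuclideanSpace ℝ (Fin d)) 2 _] with t ht h0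
    rw [h0] at ht
    ext i
    simpa using congrFun ht i
  -- A nonzero constant is not square integrable on a half-line.
  have hφ0 : ∀ i, φ i 0 = 0 := by
    have h := Lp.const_eq_zero_of_ae_eq two_ne_zero ENNReal.ofNat_ne_top (by simp) (Φ 0) hΦ0
    exact fun i => by simpa using congrArg (· i) h
  refine SG_subset_of_inner_nonpos (hsec' ⟨0, hd⟩).le fun u _ => ?_
  rw [sub_zero]
  refine L2.inner_sub_smul_nonpos_of_sectorBounded hsec' hφ0 ?_
  filter_upwards [Lp.coeFn_sub (Φ u) (Φ 0), hΦ u, hΦ0] with t hsub hu h0 i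
  rw [hsub, Pi.sub_apply, PiLp.sub_apply, congrFun hu i, h0]
  simp [hφ0]

/-- scaled graph at zero of a diagonal static sector-bounded nonlinearity: let
`φ_i : ℝ → ℝ` be Borel measurable and satisfy the non-incremental sector bound
`φ_i ∈ [μ_i, λ_i]`, i.e. `μ_i x² ≤ x·φ_i(x) ≤ λ_i x²` for all `x` (so `φ_i(0) = 0` and
`|φ_i(x)| ≤ max(|μ_i|,|λ_i|)·|x|`), and let `Φ : L₂^d → L₂^d` act diagonally and statically,
`(Φu)(t) = (φ₁(u₁(t)),…,φ_d(u_d(t)))` (a.e.). With `μ = min_i μ_i` and `λ = max_i λ_i`, the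
scaled graph of `Φ` at zero (over all of `L₂^d`) is contained in the disk centered at
`(λ+μ)/2` with radius `(λ−μ)/2`. -/
theorem stmt19 (d : ℕ) (hd : 1 ≤ d) (φ : Fin d → ℝ → ℝ) (m l : Fin d → ℝ)
    (hml : ∀ i, m i ≤ l i) (hmeas : ∀ i, Measurable (φ i))
    (hsec : ∀ i, ∀ x : ℝ,
      m i * x ^ 2 ≤ x * φ i x ∧ x * φ i x ≤ l i * x ^ 2)
    (Φ : L2S d → L2S d)
    (hΦ : ∀ u : L2S d, ∀ᵐ t ∂(MeasureTheory.volume.restrict (Set.Ici (0 : ℝ))),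
      (Φ u : ℝ → EuclideanSpace ℝ (Fin d)) t =
        fun i => φ i ((u : ℝ → EuclideanSpace ℝ (Fin d)) t i)) :
    SG Φ (Set.univ : Set (L2S d)) 0 ⊆
      { z : ℂ | ‖z - (((sSup (Set.range l) + sInf (Set.range m)) / 2 : ℝ) : ℂ)‖ ≤
          (sSup (Set.range l) - sInf (Set.range m)) / 2 } :=
  stmt19_general d hd φ m l hsec Φ hΦ
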